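/- arXiv:1506.00966 — 2 statements merged into one kernel-verified Lean document; each statement's English description precedes it below -/
import Mathlib

section
/- There exists a constant C₀ ≥ 1 such that for every finite Borel measure μ on ℝ² and all radii 0 < r₁ ≤ r₂, one has ‖μ‖_{r₂} ≤ C₀ · ‖μ‖_{r₁}. -/
/-!
If `x ∈ B(z, R)` then `B(x, r) ⊆ B(z, R + r)`, so by Tonelli
`μ(B(z, R)) |B_r| ≤ ∫_{B(z, R + r)} μ(B(w, r)) dw`. Squaring, applying Cauchy–Schwarz on the ball
`B(z, R + r)` and integrating in `z` (Tonelli again) gives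
`|B_r|² ∫ μ(B(z, R))² dz ≤ |B_{R+r}|² ∫ μ(B(z, r))² dz`. By scaling `|B_{R+r}| / |B_r| = ((R + r) / r)^d`,
which is at most `2^d` when `r ≤ R`; in the plane this yields `C₀ = 4`.
-/

open Metric MeasureTheory
open scoped ENNReal

noncomputable def rNorm (μ : Measure (EuclideanSpace ℝ (Fin 2))) (r : ℝ) : ℝ :=
  Real.sqrt ((1 / r ^ 4) * ∫ z : EuclideanSpace ℝ (Fin 2), ((μ (ball z r)).toReal) ^ 2)

section Tonelli

variable {α : Type*} [PseudoMetricSpace α] [MeasurableSpace α] [OpensMeasurableSpace α]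
  [SecondCountableTopology α] (μ ν : Measure α) [SFinite μ] [SFinite ν]

theorem measurable_measure_ball (r : ℝ) : Measurable fun z ↦ μ (ball z r) :=
  measurable_measure_prodMk_left (measurableSet_lt (by fun_prop) measurable_const :
    MeasurableSet {p : α × α | dist p.2 p.1 < r})

theorem lintegral_setLIntegral_ball_eq_lintegral_mul {f : α → ℝ≥0∞} (hf : Measurable f)
    (r : ℝ) :
    ∫⁻ x, ∫⁻ w in ball x r, f w ∂ν ∂μ = ∫⁻ w, f w * μ (ball w r) ∂ν := by
  have hmeas : Measurable (Function.uncurry fun x w ↦ (ball x r).indicator f w) := by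
    have hS : MeasurableSet {p : α × α | dist p.2 p.1 < r} :=
      measurableSet_lt (by fun_prop) measurable_const
    convert (hf.comp measurable_snd).indicator hS using 1
    ext ⟨x, w⟩
    simp only [Function.uncurry_apply_pair, Set.indicator, mem_ball, Set.mem_ofPred_eq,
      Function.comp_apply]
  have hsymm (x w : α) : (ball x r).indicator f w = (ball w r).indicator (fun _ ↦ f w) x := by
    simp only [Set.indicator, mem_ball, dist_comm]
  simp_rw [← lintegral_indicator measurableSet_ball]
  rw [lintegral_lintegral_swap hmeas.aemeasurable]
  simp_rw [hsymm, lintegral_indicator_const measurableSet_ball]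

end Tonelli

theorem sq_lintegral_le_measure_univ_mul {α : Type*} [MeasurableSpace α] (ν : Measure α)
    {g : α → ℝ≥0∞} (hg : AEMeasurable g ν) :
    (∫⁻ a, g a ∂ν) ^ 2 ≤ ν Set.univ * ∫⁻ a, g a ^ 2 ∂ν := by
  have hCS := ENNReal.lintegral_mul_le_Lp_mul_Lq ν .two_two hg aemeasurable_const (g := 1)
  simp only [Pi.mul_apply, Pi.one_apply, mul_one, ENNReal.one_rpow, lintegral_const,
    one_mul] at hCS
  calc (∫⁻ a, g a ∂ν) ^ 2
      ≤ ((∫⁻ a, g a ^ (2 : ℝ) ∂ν) ^ (1 / 2 : ℝ) * ν Set.univ ^ (1 / 2 : ℝ)) ^ 2 := by gcongr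
    _ = ν Set.univ * ∫⁻ a, g a ^ 2 ∂ν := by
      rw [mul_pow, mul_comm, ← ENNReal.rpow_natCast, ← ENNReal.rpow_natCast,
        ← ENNReal.rpow_mul, ← ENNReal.rpow_mul]
      norm_num

section Haar

variable {E : Type*} [NormedAddCommGroup E] [NormedSpace ℝ E] [FiniteDimensional ℝ E]
  [MeasurableSpace E] [BorelSpace E] (μ ν : Measure E) [SFinite μ] [ν.IsAddHaarMeasure]

theorem measure_ball_mul_le_setLIntegral (z : E) (r R : ℝ) :
    μ (ball z R) * ν (ball 0 r) ≤ ∫⁻ w in ball z (R + r), μ (ball w r) ∂ν := by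
  set s := ball z (R + r)
  have hcover (x : E) (hx : x ∈ ball z R) : ball x r ⊆ s :=
    ball_subset_ball' (by linarith [mem_ball.1 hx])
  calc μ (ball z R) * ν (ball 0 r) = ∫⁻ x in ball z R, ν (ball x r) ∂μ := by
        simp only [Measure.addHaar_ball_center, setLIntegral_const, mul_comm]
    _ = ∫⁻ x in ball z R, ∫⁻ w in ball x r, s.indicator 1 w ∂ν ∂μ := by
        refine setLIntegral_congr_fun measurableSet_ball fun x hx ↦ ?_
        rw [lintegral_indicator_one measurableSet_ball, Measure.restrict_apply measurableSet_ball,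
          Set.inter_eq_right.2 (hcover x hx)]
    _ ≤ ∫⁻ x, ∫⁻ w in ball x r, s.indicator 1 w ∂ν ∂μ := setLIntegral_le_lintegral _ _
    _ = ∫⁻ w, s.indicator 1 w * μ (ball w r) ∂ν :=
        lintegral_setLIntegral_ball_eq_lintegral_mul μ ν
          (measurable_one.indicator measurableSet_ball) r
    _ = ∫⁻ w in s, μ (ball w r) ∂ν := by
        rw [← lintegral_indicator measurableSet_ball]
        simp only [Set.indicator, Pi.one_apply, ite_mul, one_mul, zero_mul]
        rfl

theorem lintegral_measure_ball_sq_mul_le (r R : ℝ) :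
    (∫⁻ z, μ (ball z R) ^ 2 ∂ν) * ν (ball 0 r) ^ 2
      ≤ ν (ball 0 (R + r)) ^ 2 * ∫⁻ z, μ (ball z r) ^ 2 ∂ν := by
  set ρ := R + r
  have hg : Measurable fun w ↦ μ (ball w r) ^ 2 := (measurable_measure_ball μ r).pow_const 2
  have hpointwise (z : E) : μ (ball z R) ^ 2 * ν (ball 0 r) ^ 2
      ≤ ν (ball 0 ρ) * ∫⁻ w in ball z ρ, μ (ball w r) ^ 2 ∂ν :=
    calc μ (ball z R) ^ 2 * ν (ball 0 r) ^ 2 = (μ (ball z R) * ν (ball 0 r)) ^ 2 :=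
          (mul_pow ..).symm
      _ ≤ (∫⁻ w in ball z ρ, μ (ball w r) ∂ν) ^ 2 := by
          gcongr; exact measure_ball_mul_le_setLIntegral μ ν z r R
      _ ≤ ν (ball z ρ) * ∫⁻ w in ball z ρ, μ (ball w r) ^ 2 ∂ν := by
          simpa using sq_lintegral_le_measure_univ_mul (ν.restrict (ball z ρ))
            (measurable_measure_ball μ r).aemeasurable
      _ = ν (ball 0 ρ) * ∫⁻ w in ball z ρ, μ (ball w r) ^ 2 ∂ν := by
          rw [Measure.addHaar_ball_center]
  calc (∫⁻ z, μ (ball z R) ^ 2 ∂ν) * ν (ball 0 r) ^ 2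
        = ∫⁻ z, μ (ball z R) ^ 2 * ν (ball 0 r) ^ 2 ∂ν :=
        (lintegral_mul_const _ ((measurable_measure_ball μ R).pow_const 2)).symm
    _ ≤ ∫⁻ z, ν (ball 0 ρ) * ∫⁻ w in ball z ρ, μ (ball w r) ^ 2 ∂ν ∂ν :=
        lintegral_mono hpointwise
    _ = ν (ball 0 ρ) * ∫⁻ w, μ (ball w r) ^ 2 * ν (ball w ρ) ∂ν := by
        rw [lintegral_const_mul' _ _ measure_ball_lt_top.ne,
          lintegral_setLIntegral_ball_eq_lintegral_mul ν ν hg]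
    _ = ν (ball 0 ρ) ^ 2 * ∫⁻ z, μ (ball z r) ^ 2 ∂ν := by
        simp_rw [Measure.addHaar_ball_center ν _ ρ, lintegral_mul_const _ hg]
        ring

theorem lintegral_measure_ball_sq_le {r : ℝ} (hr : 0 < r) {R : ℝ} (hR : 0 ≤ R) :
    ∫⁻ z, μ (ball z R) ^ 2 ∂ν
      ≤ ENNReal.ofReal (((R + r) / r) ^ (2 * Module.finrank ℝ E))
        * ∫⁻ z, μ (ball z r) ^ 2 ∂ν := by
  have hpos : ν (ball 0 r) ^ 2 ≠ 0 := pow_ne_zero _ (measure_ball_pos ν 0 hr).ne'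
  have hfin : ν (ball 0 r) ^ 2 ≠ ∞ := ENNReal.pow_ne_top measure_ball_lt_top.ne
  have hscale : ν (ball 0 (R + r))
      = ENNReal.ofReal (((R + r) / r) ^ Module.finrank ℝ E) * ν (ball 0 r) := by
    rw [← Measure.addHaar_ball_mul_of_pos ν 0 (by positivity), div_mul_cancel₀ _ hr.ne']
  rw [← ENNReal.mul_le_mul_iff_left hpos hfin]
  refine (lintegral_measure_ball_sq_mul_le μ ν r R).trans_eq ?_
  rw [hscale, mul_pow, ← ENNReal.ofReal_pow (by positivity), ← pow_mul, mul_comm _ 2]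
  ring

theorem lintegral_measure_ball_sq_lt_top [IsFiniteMeasure μ] (r : ℝ) :
    ∫⁻ z, μ (ball z r) ^ 2 ∂ν < ∞ := by
  have hmass : ∫⁻ z, μ (ball z r) ∂ν = ν (ball 0 r) * μ Set.univ := by
    have := lintegral_setLIntegral_ball_eq_lintegral_mul μ ν measurable_one r
    simp_rw [Pi.one_apply, one_mul, lintegral_one, Measure.restrict_apply_univ,
      Measure.addHaar_ball_center, lintegral_const] at this
    exact this.symm
  calc ∫⁻ z, μ (ball z r) ^ 2 ∂ν ≤ ∫⁻ z, μ Set.univ * μ (ball z r) ∂ν :=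
        lintegral_mono fun z ↦ by rw [sq]; gcongr; exact Set.subset_univ _
    _ = μ Set.univ * (ν (ball 0 r) * μ Set.univ) := by
        rw [lintegral_const_mul' _ _ (measure_ne_top _ _), hmass]
    _ < ∞ := by finiteness

end Haar

theorem rNorm_eq_sqrt_lintegral (μ : Measure (EuclideanSpace ℝ (Fin 2))) [IsFiniteMeasure μ]
    (r : ℝ) : rNorm μ r = √(1 / r ^ 4 * (∫⁻ z, μ (ball z r) ^ 2).toReal) := by
  rw [rNorm, ← integral_toReal ((measurable_measure_ball μ r).pow_const 2).aemeasurable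
    (ae_of_all _ fun z ↦ by finiteness)]
  simp_rw [ENNReal.toReal_pow]

/-- There is a constant `C₀ ≥ 1` such that for every finite Borel measure `μ`
on `ℝ²` and all radii `0 < r₁ ≤ r₂`, `‖μ‖_{r₂} ≤ C₀ ‖μ‖_{r₁}`. -/
theorem rNorm_scale_comparison :
    ∃ C₀ : ℝ, 1 ≤ C₀ ∧
      ∀ (μ : Measure (EuclideanSpace ℝ (Fin 2))), IsFiniteMeasure μ →
        ∀ r₁ r₂ : ℝ, 0 < r₁ → r₁ ≤ r₂ →
          rNorm μ r₂ ≤ C₀ * rNorm μ r₁ := by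
  refine ⟨4, by norm_num, fun μ _ r₁ r₂ hr₁ h12 ↦ ?_⟩
  have hr₂ : 0 < r₂ := hr₁.trans_le h12
  set L := fun r ↦ (∫⁻ z, μ (ball z r) ^ 2).toReal
  have hcomp := lintegral_measure_ball_sq_le μ volume hr₁ hr₂.le
  rw [finrank_euclideanSpace_fin] at hcomp
  have hL : L r₂ ≤ ((r₂ + r₁) / r₁) ^ 4 * L r₁ := by
    have := ENNReal.toReal_mono (by finiteness [lintegral_measure_ball_sq_lt_top μ volume r₁]) hcomp
    rwa [ENNReal.toReal_mul, ENNReal.toReal_ofReal (by positivity)] at this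
  have hratio : 1 / r₂ ^ 4 * ((r₂ + r₁) / r₁) ^ 4 ≤ 4 ^ 2 * (1 / r₁ ^ 4) := by
    rw [div_pow, ← mul_div_assoc, div_le_iff₀ (by positivity)]
    field_simp
    nlinarith [pow_le_pow_left₀ (by positivity) (by linarith : r₂ + r₁ ≤ 2 * r₂) 4]
  rw [rNorm_eq_sqrt_lintegral, rNorm_eq_sqrt_lintegral,
    ← Real.sqrt_sq (by norm_num : (0 : ℝ) ≤ 4), ← Real.sqrt_mul (by norm_num)]
  refine Real.sqrt_le_sqrt ?_
  calc 1 / r₂ ^ 4 * L r₂ ≤ 1 / r₂ ^ 4 * (((r₂ + r₁) / r₁) ^ 4 * L r₁) := by gcongr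
    _ ≤ 4 ^ 2 * (1 / r₁ ^ 4) * L r₁ := by rw [← mul_assoc]; gcongr
    _ = 4 ^ 2 * (1 / r₁ ^ 4 * L r₁) := by ring
end

section
/- Let v₁, v₂ be unit vectors of ℝ² with ⟨v₁, v₂⟩ ≥ 0, and let δ > 0 satisfy δ ≤ ‖v₁ − v₂‖ ≤ 3/2. Let A₁, A₂ be invertible linear maps of ℝ² with ‖A₁ − Id‖ ≤ 1/2, ‖A₂ − Id‖ ≤ 1/2 (operator norm), and ‖Id − A₁⁻¹A₂‖ ≤ δ/20. Then ‖A₁v₁/‖A₁v₁‖ − A₂v₂/‖A₂v₂‖‖ ≥ δ/80. -/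
open EuclideanSpace

/-- The Euclidean plane. -/
abbrev Plane := EuclideanSpace ℝ (Fin 2)

/-!
Write `a = ‖A₁ v₁‖⁻¹`, `b = ‖A₂ v₂‖⁻¹` and `B = A₁⁻¹ A₂`. Since `‖Aᵢ - Id‖ ≤ 1/2`, both `a` and `b`
lie in `[2/3, 2]` and `‖A₁⁻¹‖ ≤ 2`. Rescaling two unit vectors by factors at least `2/3` shrinks
their distance by at most the factor `2/3`, so `‖a v₁ - b v₂‖ ≥ 2δ/3`; replacing `v₂` by `B v₂`
costs at most `b δ/20 ≤ δ/10`. Finally `A₁⁻¹` maps the difference of the normalized images to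
`a v₁ - b B v₂`, and can expand lengths by at most `2`.
-/

section RescaledUnitVectors

variable {E : Type*} [NormedAddCommGroup E] [InnerProductSpace ℝ E]

theorem min_mul_norm_sub_le_norm_smul_sub_smul {u v : E} (hu : ‖u‖ = 1) (hv : ‖v‖ = 1)
    {a b : ℝ} (ha : 0 ≤ a) (hb : 0 ≤ b) :
    min a b * ‖u - v‖ ≤ ‖a • u - b • v‖ := by
  set m := min a b
  have hm : 0 ≤ m := le_min ha hb
  have hc : inner ℝ u v ≤ 1 := by simpa [hu, hv] using real_inner_le_norm u v
  have hmab : m * m ≤ a * b := mul_le_mul (min_le_left a b) (min_le_right a b) hm ha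
  have hsq_lhs : (m * ‖u - v‖) ^ 2 = m ^ 2 * (2 - 2 * inner ℝ u v) := by
    rw [mul_pow, norm_sub_sq_real, hu, hv]; ring
  have hsq_rhs : ‖a • u - b • v‖ ^ 2 = a ^ 2 + b ^ 2 - 2 * a * b * inner ℝ u v := by
    rw [norm_sub_sq_real, norm_smul, norm_smul, real_inner_smul_left, real_inner_smul_right,
      Real.norm_of_nonneg ha, Real.norm_of_nonneg hb, hu, hv]
    ring
  -- the difference of the squares is `(a - b)² + 2 (1 - ⟪u, v⟫) (a b - m²)`
  refine (pow_le_pow_iff_left₀ (by positivity) (norm_nonneg _) two_ne_zero).mp ?_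
  rw [hsq_lhs, hsq_rhs]
  nlinarith [sq_nonneg (a - b), mul_nonneg (sub_nonneg.mpr hc) (sub_nonneg.mpr hmab)]

end RescaledUnitVectors

namespace ContinuousLinearMap

variable {𝕜 E : Type*} [NontriviallyNormedField 𝕜] [NormedAddCommGroup E] [NormedSpace 𝕜 E]

theorem norm_apply_sub_le (f : E →L[𝕜] E) (x : E) : ‖f x - x‖ ≤ ‖f - ContinuousLinearMap.id 𝕜 E‖ * ‖x‖ := by
  simpa using (f - ContinuousLinearMap.id 𝕜 E).le_opNorm x

variable {f : E →L[𝕜] E} {r : ℝ}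

theorem norm_apply_le_of_norm_sub_id_le (h : ‖f - ContinuousLinearMap.id 𝕜 E‖ ≤ r) (x : E) :
    ‖f x‖ ≤ (1 + r) * ‖x‖ := by
  have := norm_apply_sub_le f x
  have := norm_sub_norm_le (f x) x
  nlinarith [norm_nonneg x]

theorem mul_norm_le_norm_apply_of_norm_sub_id_le (h : ‖f - ContinuousLinearMap.id 𝕜 E‖ ≤ r) (x : E) :
    (1 - r) * ‖x‖ ≤ ‖f x‖ := by
  have := norm_apply_sub_le f x
  have := norm_sub_norm_le x (f x)
  rw [norm_sub_rev] at this
  nlinarith [norm_nonneg x]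

theorem inv_norm_apply_mem_Icc_of_norm_sub_id_le (hr : r < 1) (h : ‖f - ContinuousLinearMap.id 𝕜 E‖ ≤ r) {v : E}
    (hv : ‖v‖ = 1) : ‖f v‖⁻¹ ∈ Set.Icc (1 + r)⁻¹ (1 - r)⁻¹ := by
  have hlow := mul_norm_le_norm_apply_of_norm_sub_id_le h v
  have hupp := norm_apply_le_of_norm_sub_id_le h v
  rw [hv, mul_one] at hlow hupp
  exact ⟨inv_anti₀ (by linarith) hupp, inv_anti₀ (by linarith) hlow⟩

end ContinuousLinearMap

theorem ContinuousLinearEquiv.norm_symm_apply_le_of_norm_sub_id_le {𝕜 E : Type*}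
    [NontriviallyNormedField 𝕜] [NormedAddCommGroup E] [NormedSpace 𝕜 E] {f : E ≃L[𝕜] E}
    {r : ℝ} (hr : r < 1) (h : ‖(f : E →L[𝕜] E) - ContinuousLinearMap.id 𝕜 E‖ ≤ r) (y : E) :
    ‖f.symm y‖ ≤ (1 - r)⁻¹ * ‖y‖ := by
  have := ContinuousLinearMap.mul_norm_le_norm_apply_of_norm_sub_id_le h (f.symm y)
  rw [coe_coe, apply_symm_apply] at this
  rwa [le_inv_mul_iff₀ (by linarith)]

theorem normalized_images_separated_general
    (v₁ v₂ : Plane) (hv₁ : ‖v₁‖ = 1) (hv₂ : ‖v₂‖ = 1)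
    (δ : ℝ) (hδ : 0 < δ) (hlow : δ ≤ ‖v₁ - v₂‖)
    (A₁ A₂ : Plane ≃L[ℝ] Plane)
    (hA₁ : ‖(A₁ : Plane →L[ℝ] Plane) - ContinuousLinearMap.id ℝ Plane‖ ≤ 1 / 2)
    (hA₂ : ‖(A₂ : Plane →L[ℝ] Plane) - ContinuousLinearMap.id ℝ Plane‖ ≤ 1 / 2)
    (hA₁₂ : ‖ContinuousLinearMap.id ℝ Plane -
        ((A₂.trans A₁.symm : Plane ≃L[ℝ] Plane) : Plane →L[ℝ] Plane)‖ ≤ δ / 20) :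
    δ / 80 ≤ ‖(‖A₁ v₁‖⁻¹ • (A₁ v₁ : Plane)) - ‖A₂ v₂‖⁻¹ • (A₂ v₂ : Plane)‖ := by
  set a := ‖A₁ v₁‖⁻¹
  set b := ‖A₂ v₂‖⁻¹
  set B := A₂.trans A₁.symm
  obtain ⟨ha, -⟩ := ContinuousLinearMap.inv_norm_apply_mem_Icc_of_norm_sub_id_le
    (by norm_num) hA₁ hv₁
  obtain ⟨hb, hb'⟩ := ContinuousLinearMap.inv_norm_apply_mem_Icc_of_norm_sub_id_le
    (by norm_num) hA₂ hv₂
  norm_num at ha hb hb'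
  have hrescale : 2 / 3 * δ ≤ ‖a • v₁ - b • v₂‖ :=
    calc 2 / 3 * δ ≤ min a b * ‖v₁ - v₂‖ := mul_le_mul (le_min ha hb) hlow hδ.le (by positivity)
      _ ≤ _ := min_mul_norm_sub_le_norm_smul_sub_smul hv₁ hv₂ (by positivity) (by positivity)
  have hB : ‖B v₂ - v₂‖ ≤ δ / 20 := by
    have := ContinuousLinearMap.norm_apply_sub_le (B : Plane →L[ℝ] Plane) v₂
    rw [norm_sub_rev (B : Plane →L[ℝ] Plane), hv₂, mul_one] at this
    exact this.trans hA₁₂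
  have hperturb : ‖a • v₁ - b • v₂‖ - b * ‖B v₂ - v₂‖ ≤ ‖a • v₁ - b • B v₂‖ := by
    have := norm_sub_norm_le (a • v₁ - b • v₂) (a • v₁ - b • B v₂)
    rw [sub_sub_sub_cancel_left, ← smul_sub, norm_smul, Real.norm_of_nonneg (by positivity)]
      at this
    linarith
  have hpullback : A₁.symm (a • A₁ v₁ - b • A₂ v₂) = a • v₁ - b • B v₂ := by
    simp only [map_sub, map_smul, ContinuousLinearEquiv.symm_apply_apply]; rfl
  have hA₁inv := ContinuousLinearEquiv.norm_symm_apply_le_of_norm_sub_id_le (by norm_num) hA₁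
    (a • A₁ v₁ - b • A₂ v₂)
  rw [hpullback] at hA₁inv
  nlinarith [mul_le_mul hb' hB (norm_nonneg _) (by norm_num)]

/-- quantitative preservation of transversality by near-identity maps,
computational core of Claim 5.1. If `v₁, v₂` are unit vectors of `ℝ²` with `⟨v₁, v₂⟩ ≥ 0`
and `δ ≤ ‖v₁ − v₂‖ ≤ 3/2`, and `A₁, A₂` are invertible linear maps with
`‖Aᵢ − Id‖ ≤ 1/2` and `‖Id − A₁⁻¹A₂‖ ≤ δ/20`, then the normalized images stay
`δ/80`-separated. -/
theorem normalized_images_separated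
    (v₁ v₂ : Plane) (hv₁ : ‖v₁‖ = 1) (hv₂ : ‖v₂‖ = 1)
    (hinner : 0 ≤ (inner ℝ v₁ v₂ : ℝ))
    (δ : ℝ) (hδ : 0 < δ) (hlow : δ ≤ ‖v₁ - v₂‖) (hup : ‖v₁ - v₂‖ ≤ 3 / 2)
    (A₁ A₂ : Plane ≃L[ℝ] Plane)
    (hA₁ : ‖(A₁ : Plane →L[ℝ] Plane) - ContinuousLinearMap.id ℝ Plane‖ ≤ 1 / 2)
    (hA₂ : ‖(A₂ : Plane →L[ℝ] Plane) - ContinuousLinearMap.id ℝ Plane‖ ≤ 1 / 2)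
    (hA₁₂ : ‖ContinuousLinearMap.id ℝ Plane -
        ((A₂.trans A₁.symm : Plane ≃L[ℝ] Plane) : Plane →L[ℝ] Plane)‖ ≤ δ / 20) :
    δ / 80 ≤ ‖(‖A₁ v₁‖⁻¹ • (A₁ v₁ : Plane)) - ‖A₂ v₂‖⁻¹ • (A₂ v₂ : Plane)‖ :=
  normalized_images_separated_general v₁ v₂ hv₁ hv₂ δ hδ hlow A₁ A₂ hA₁ hA₂ hA₁₂
end
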